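/- arXiv:2403.02284 — 8 statements merged into one kernel-verified Lean document; each statement's English description precedes it below -/
import Mathlib

section
/- For real matrices A, B ∈ ℝ^{n×k}, the following are equivalent: (1) A·Aᵀ = B·Bᵀ; (2) there exists an orthogonal matrix R ∈ ℝ^{k×k} (RᵀR = R Rᵀ = I) such that A·R = B. -/
/-!
If `A Aᴴ = B Bᴴ`, then `‖Aᴴ x‖ = ‖Bᴴ x‖` for every `x`, so `Aᴴ x ↦ Bᴴ x` is a well-defined
linear isometry on the range of `Aᴴ`. Extending it to a linear isometry `V` of the whole space
gives a unitary matrix with `V Aᴴ = Bᴴ`, i.e. `A Vᴴ = B`. The converse is a direct computation.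
-/

open Matrix

namespace LinearMap

theorem exists_comp_rangeRestrict_eq_of_ker_le {R M N P : Type*} [Ring R] [AddCommGroup M]
    [Module R M] [AddCommGroup N] [Module R N] [AddCommGroup P] [Module R P]
    {f : M →ₗ[R] N} {g : M →ₗ[R] P} (h : ker f ≤ ker g) :
    ∃ φ : range f →ₗ[R] P, φ ∘ₗ f.rangeRestrict = g :=
  ⟨(ker f).liftQ g h ∘ₗ f.quotKerEquivRange.symm.toLinearMap, by
    ext x
    exact congr_arg ((ker f).liftQ g h) (f.quotKerEquivRange_symm_apply_image x _)⟩

theorem exists_linearIsometryEquiv_comp_eq {𝕜 E F : Type*} [RCLike 𝕜]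
    [AddCommGroup E] [Module 𝕜 E] [NormedAddCommGroup F] [InnerProductSpace 𝕜 F]
    [FiniteDimensional 𝕜 F] {f g : E →ₗ[𝕜] F} (h : ∀ x, ‖f x‖ = ‖g x‖) :
    ∃ U : F ≃ₗᵢ[𝕜] F, ∀ x, U (f x) = g x := by
  have hker : ker f ≤ ker g := fun x hx => by
    simpa [← norm_eq_zero, ← h x] using hx
  obtain ⟨φ, hφ⟩ := exists_comp_rangeRestrict_eq_of_ker_le hker
  have hφ_apply (x : E) : φ ⟨f x, mem_range_self f x⟩ = g x := congr($hφ x)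
  let L : range f →ₗᵢ[𝕜] F := ⟨φ, by rintro ⟨_, x, rfl⟩; simp [hφ_apply, h]⟩
  exact ⟨L.extend.toLinearIsometryEquiv rfl, fun x => (L.extend_apply _).trans (hφ_apply x)⟩

end LinearMap

namespace Matrix

variable {𝕜 m n : Type*} [RCLike 𝕜] [Fintype m] [DecidableEq m] [Fintype n] [DecidableEq n]

theorem toEuclideanCLM_symm_mem_unitaryGroup
    (U : EuclideanSpace 𝕜 n ≃ₗᵢ[𝕜] EuclideanSpace 𝕜 n) :
    (toEuclideanCLM (n := n) (𝕜 := 𝕜)).symm (U : EuclideanSpace 𝕜 n →L[𝕜] EuclideanSpace 𝕜 n) ∈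
      unitaryGroup n 𝕜 :=
  Unitary.map_mem _ (Unitary.linearIsometryEquiv.symm U).prop

theorem inner_toEuclideanLin_conjTranspose_self (A : Matrix m n 𝕜) (x : EuclideanSpace 𝕜 m) :
    inner 𝕜 (toEuclideanLin Aᴴ x) (toEuclideanLin Aᴴ x) =
      inner 𝕜 x (toEuclideanLin (A * Aᴴ) x) := by
  rw [toEuclideanLin_conjTranspose_eq_adjoint, LinearMap.adjoint_inner_left, toLpLin_mul_same,
    toEuclideanLin_conjTranspose_eq_adjoint]
  rfl

theorem mul_conjTranspose_self_eq_iff_exists_mem_unitaryGroup (A B : Matrix m n 𝕜) :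
    A * Aᴴ = B * Bᴴ ↔ ∃ U ∈ unitaryGroup n 𝕜, A * U = B := by
  constructor
  · intro h
    have hnorm (x : EuclideanSpace 𝕜 m) : ‖toEuclideanLin Aᴴ x‖ = ‖toEuclideanLin Bᴴ x‖ := by
      rw [norm_eq_sqrt_re_inner (𝕜 := 𝕜), norm_eq_sqrt_re_inner (𝕜 := 𝕜),
        inner_toEuclideanLin_conjTranspose_self, inner_toEuclideanLin_conjTranspose_self, h]
    obtain ⟨V, hV⟩ := LinearMap.exists_linearIsometryEquiv_comp_eq hnorm
    set M := (toEuclideanCLM (n := n) (𝕜 := 𝕜)).symm V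
    have hM : M * Aᴴ = Bᴴ := toEuclideanLin.injective <| LinearMap.ext fun x => by
      simpa [M, ← coe_toEuclideanCLM_eq_toEuclideanLin] using hV x
    refine ⟨Mᴴ, Unitary.star_mem (toEuclideanCLM_symm_mem_unitaryGroup V), ?_⟩
    simpa using congr_arg conjTranspose hM
  · rintro ⟨U, hU, rfl⟩
    rw [conjTranspose_mul, Matrix.mul_assoc, ← Matrix.mul_assoc U, ← star_eq_conjTranspose,
      mem_unitaryGroup_iff.mp hU, Matrix.one_mul]

end Matrix

/-- For real matrices `A, B ∈ ℝ^{n×k}`, `A·Aᵀ = B·Bᵀ` iff there is an orthogonal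
matrix `R ∈ ℝ^{k×k}` with `A·R = B`. -/
theorem orth_column_equivalence {n k : ℕ} (A B : Matrix (Fin n) (Fin k) ℝ) :
    A * Aᵀ = B * Bᵀ ↔
      ∃ R : Matrix (Fin k) (Fin k) ℝ, R * Rᵀ = 1 ∧ Rᵀ * R = 1 ∧ A * R = B := by
  simp only [← conjTranspose_eq_transpose_of_trivial,
    mul_conjTranspose_self_eq_iff_exists_mem_unitaryGroup, Unitary.mem_iff, star_eq_conjTranspose]
  exact exists_congr fun _ => by tauto
end

section
/- Every nonnegative partial quadratic function f : ℝ^n → [0,∞] is convex, in the sense that its epigraph {(x,t) ∈ ℝ^n × ℝ : (f(x) : [0,∞]) ≤ t} is a convex subset of ℝ^n × ℝ. -/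
open Matrix
open scoped ENNReal

private lemma quad_lead_nonneg {a b c : ℝ} (h : ∀ t : ℝ, 0 ≤ a * t^2 + b * t + c) :
    0 ≤ a := by
  by_contra ha
  push_neg at ha
  set T : ℝ := max 1 ((|b| + c + 1) / (-a)) with hT
  have hT1 : (1:ℝ) ≤ T := le_max_left _ _
  have hT2 : (|b| + c + 1) / (-a) ≤ T := le_max_right _ _
  have hTa : |b| + c + 1 ≤ T * (-a) := (div_le_iff₀ (by linarith)).mp hT2
  have hc : 0 ≤ c := by simpa using h 0
  have h1 := h T
  nlinarith [abs_nonneg b, neg_abs_le b, le_abs_self b,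
    mul_le_mul_of_nonneg_left hTa (by linarith : (0:ℝ) ≤ T)]

/-- A nonnegative partial quadratic function on `ℝ^ι`: there are an affine subspace `M`,
a symmetric matrix `Q`, a vector `b` and a constant `c` such that the quadratic expression
`⟨x, Qx⟩ + ⟨b, x⟩ + c` is nonnegative on `M`, `f x` equals it on `M`, and `f x = ∞` off `M`. -/
def IsNPQF {ι : Type} [Fintype ι] (f : (ι → ℝ) → ℝ≥0∞) : Prop :=
  ∃ (M : AffineSubspace ℝ (ι → ℝ)) (Q : Matrix ι ι ℝ) (b : ι → ℝ) (c : ℝ),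
    Q.IsSymm ∧
    (∀ x ∈ M, 0 ≤ x ⬝ᵥ Q.mulVec x + b ⬝ᵥ x + c) ∧
    (∀ x ∈ M, f x = ENNReal.ofReal (x ⬝ᵥ Q.mulVec x + b ⬝ᵥ x + c)) ∧
    (∀ x, x ∉ M → f x = ⊤)

/-- Every nonnegative partial quadratic function `f : ℝⁿ → [0,∞]` is convex: its epigraph
`{(x,t) : f x ≤ t}` is a convex subset of `ℝⁿ × ℝ`. -/
theorem isNPQF_convex_epigraph {n : ℕ} (f : (Fin n → ℝ) → ℝ≥0∞) (hf : IsNPQF f) :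
    Convex ℝ {p : (Fin n → ℝ) × ℝ | 0 ≤ p.2 ∧ f p.1 ≤ ENNReal.ofReal p.2} := by
  obtain ⟨M, Q, b, c, hsym, h0, heq, htop⟩ := hf
  set q : (Fin n → ℝ) → ℝ := fun x => x ⬝ᵥ Q.mulVec x + b ⬝ᵥ x + c with hq
  rintro ⟨x, s⟩ ⟨hs0, hxs⟩ ⟨y, t⟩ ⟨ht0, hyt⟩ a a' ha ha' haa
  -- x and y are in M
  have hxM : x ∈ M := by
    by_contra hx
    rw [htop x hx] at hxs
    exact (ENNReal.ofReal_ne_top) (top_le_iff.mp hxs)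
  have hyM : y ∈ M := by
    by_contra hy
    rw [htop y hy] at hyt
    exact (ENNReal.ofReal_ne_top) (top_le_iff.mp hyt)
  -- q x ≤ s, q y ≤ t
  have hqx : q x ≤ s := by
    rw [heq x hxM] at hxs
    exact (ENNReal.ofReal_le_ofReal_iff hs0).mp hxs
  have hqy : q y ≤ t := by
    rw [heq y hyM] at hyt
    exact (ENNReal.ofReal_le_ofReal_iff ht0).mp hyt
  -- the line through x and y
  set v : Fin n → ℝ := y - x with hv
  have hline : ∀ r : ℝ, x + r • v ∈ M := by
    intro r
    have h1 := AffineMap.lineMap_mem r hxM hyM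
    rw [AffineMap.lineMap_apply_module] at h1
    have h2 : x + r • v = (1 - r) • x + r • y := by rw [hv]; module
    rwa [h2]
  set A : ℝ := v ⬝ᵥ Q.mulVec v with hA
  set B : ℝ := x ⬝ᵥ Q.mulVec v + v ⬝ᵥ Q.mulVec x + b ⬝ᵥ v with hB
  have hexp : ∀ r : ℝ, q (x + r • v) = A * r^2 + B * r + q x := by
    intro r
    simp only [hq, hA, hB, Matrix.mulVec_add, Matrix.mulVec_smul, dotProduct_add,
      add_dotProduct, smul_dotProduct, dotProduct_smul, smul_eq_mul]
    ring
  have hApos : 0 ≤ A := by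
    apply quad_lead_nonneg (b := B) (c := q x)
    intro r
    rw [← hexp r]
    exact h0 _ (hline r)
  have hyq : q y = A + B + q x := by
    have := hexp 1
    simp only [one_smul, hv] at this
    simpa using this
  -- the combination point
  have hcmb : a • x + a' • y = x + a' • v := by
    rw [hv, show a = 1 - a' by linarith]
    module
  have hcmbM : a • x + a' • y ∈ M := hcmb ▸ hline a'
  have hconv : q (a • x + a' • y) ≤ a * q x + a' * q y := by
    rw [hcmb, hexp a', hyq, show a = 1 - a' by linarith]
    nlinarith [mul_nonneg (mul_nonneg hApos ha') (by linarith : (0:ℝ) ≤ 1 - a')]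
  constructor
  · exact add_nonneg (mul_nonneg ha hs0) (mul_nonneg ha' ht0)
  · show f ((a • (x, s) + a' • (y, t)).1) ≤ ENNReal.ofReal ((a • (x, s) + a' • (y, t)).2)
    simp only [Prod.smul_mk, Prod.mk_add_mk, smul_eq_mul]
    rw [heq _ hcmbM]
    apply ENNReal.ofReal_le_ofReal
    calc q (a • x + a' • y) ≤ a * q x + a' * q y := hconv
      _ ≤ a * s + a' * t := by
          have := mul_le_mul_of_nonneg_left hqx ha
          have := mul_le_mul_of_nonneg_left hqy ha'
          linarith
end

section
/- If M ⊆ ℝ^n × ℝ^m is an affine subspace and g : ℝ^m → [0,∞] is a nonnegative partial quadratic function, then the function f : ℝ^n → [0,∞] defined by f(x) = inf { g(y) : y ∈ ℝ^m, (x,y) ∈ M } (infimum in [0,∞], with inf ∅ = +∞) is also a nonnegative partial quadratic function. -/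
open Matrix
open Module
open scoped ENNReal


lemma core {E : Type*} [AddCommGroup E] [Module ℝ E] [FiniteDimensional ℝ E]
    (B : E →ₗ[ℝ] E →ₗ[ℝ] ℝ) (hB : ∀ x y, B x y = B y x) (V : Submodule ℝ E) :
    ∃ S : Module.Dual ℝ E →ₗ[ℝ] E,
      (∀ φ, S φ ∈ V) ∧
      ∀ φ : Module.Dual ℝ E, (∀ k ∈ V, (∀ w ∈ V, B k w = 0) → φ k = 0) →
        ∀ w ∈ V, 2 * B (S φ) w + φ w = 0 := by
  classical
  set A : V →ₗ[ℝ] Module.Dual ℝ V :=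
    V.subtype.dualMap.comp (B.comp V.subtype) with hA
  have hAapp : ∀ (v w : V), A v w = B (v : E) (w : E) := fun v w => rfl
  -- range A = dualAnnihilator of ker A
  have hle : LinearMap.range A ≤ (LinearMap.ker A).dualAnnihilator := by
    rintro _ ⟨v, rfl⟩
    rw [Submodule.mem_dualAnnihilator]
    intro k hk
    have : A k = 0 := hk
    have := congrArg (fun f => f v) this
    simp only [LinearMap.zero_apply] at this
    rw [hAapp, hB]
    rw [hAapp] at this
    exact this
  have hrange : LinearMap.range A = (LinearMap.ker A).dualAnnihilator := by
    apply Submodule.eq_of_le_of_finrank_le hle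
    have h1 : finrank ℝ (LinearMap.range A) + finrank ℝ (LinearMap.ker A) = finrank ℝ V :=
      LinearMap.finrank_range_add_finrank_ker A
    have h2 : finrank ℝ ((LinearMap.ker A).dualAnnihilator)
        = finrank ℝ (V ⧸ (LinearMap.ker A)) :=
      (LinearEquiv.finrank_eq (Subspace.quotEquivAnnihilator (LinearMap.ker A))).symm
    have h3 : finrank ℝ (V ⧸ (LinearMap.ker A)) + finrank ℝ (LinearMap.ker A) = finrank ℝ V :=
      Submodule.finrank_quotient_add_finrank _
    omega
  -- a projection onto range A
  obtain ⟨C, hC⟩ := Submodule.exists_isCompl (LinearMap.range A)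
  set π := (LinearMap.range A).linearProjOfIsCompl C hC with hπ
  -- a right inverse of A onto its range
  haveI := Module.Free.of_divisionRing ℝ (LinearMap.range A)
  obtain ⟨σ, hσ⟩ := A.rangeRestrict.exists_rightInverse_of_surjective
    (LinearMap.range_eq_top.2 A.surjective_rangeRestrict)
  have hσ' : ∀ ψ : LinearMap.range A, A (σ ψ) = (ψ : Module.Dual ℝ V) := by
    intro ψ
    have := congrArg (fun f => f ψ) hσ
    simp only [LinearMap.comp_apply, LinearMap.id_apply] at this
    calc A (σ ψ) = (A.rangeRestrict (σ ψ) : Module.Dual ℝ V) := rfl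
    _ = (ψ : Module.Dual ℝ V) := by rw [this]
  refine ⟨(-(1/2 : ℝ)) • (V.subtype ∘ₗ σ ∘ₗ π ∘ₗ V.subtype.dualMap), ?_, ?_⟩
  · intro φ
    exact Submodule.smul_mem _ _ (σ (π (V.subtype.dualMap φ))).2
  · intro φ hφ w hw
    -- the restriction of φ to V lies in range A
    have hmem : V.subtype.dualMap φ ∈ LinearMap.range A := by
      rw [hrange, Submodule.mem_dualAnnihilator]
      intro k hk
      have hk' : ∀ w ∈ V, B (k : E) w = 0 := by
        intro w' hw'
        have : A k = 0 := hk
        have := congrArg (fun f => f (⟨w', hw'⟩ : V)) this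
        simpa [hAapp] using this
      exact hφ (k : E) k.2 hk'
    have hπφ : π (V.subtype.dualMap φ) = ⟨V.subtype.dualMap φ, hmem⟩ :=
      Submodule.linearProjOfIsCompl_apply_left hC ⟨V.subtype.dualMap φ, hmem⟩
    set v : V := σ (π (V.subtype.dualMap φ)) with hv
    have hAv : A v = V.subtype.dualMap φ := by
      rw [hv, hπφ, hσ' ⟨V.subtype.dualMap φ, hmem⟩]
    have hBvw : B (v : E) w = φ w := by
      have := congrArg (fun f => f (⟨w, hw⟩ : V)) hAv
      simpa [hAapp] using this
    have : ((-(1/2 : ℝ)) • (V.subtype ∘ₗ σ ∘ₗ π ∘ₗ V.subtype.dualMap)) φ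
        = (-(1/2 : ℝ)) • (v : E) := by simp [hv]
    rw [this]
    simp only [_root_.map_smul, LinearMap.smul_apply, smul_eq_mul]
    rw [hBvw]
    ring

open Module

lemma sel {E F : Type*} [AddCommGroup E] [Module ℝ E] [AddCommGroup F] [Module ℝ F]
    [FiniteDimensional ℝ E]
    (M' : AffineSubspace ℝ (E × F)) (p₀ : E × F) (hp₀ : p₀ ∈ M') :
    ∃ Λ : E →ₗ[ℝ] F,
      ∀ x, (∃ p ∈ M', p.1 = x) → (x, p₀.2 + Λ (x - p₀.1)) ∈ M' := by
  classical
  set W := M'.direction with hW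
  set ρ : W →ₗ[ℝ] E := (LinearMap.fst ℝ E F).comp W.subtype with hρ
  set D := LinearMap.range ρ with hD
  obtain ⟨C, hC⟩ := Submodule.exists_isCompl D
  set π := D.linearProjOfIsCompl C hC with hπ
  haveI := Module.Free.of_divisionRing ℝ D
  obtain ⟨σ, hσ⟩ := ρ.rangeRestrict.exists_rightInverse_of_surjective
    (LinearMap.range_eq_top.2 ρ.surjective_rangeRestrict)
  have hσ' : ∀ ψ : D, ρ (σ ψ) = (ψ : E) := by
    intro ψ
    have := congrArg (fun f => f ψ) hσ
    simp only [LinearMap.comp_apply, LinearMap.id_apply] at this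
    calc ρ (σ ψ) = (ρ.rangeRestrict (σ ψ) : E) := rfl
    _ = (ψ : E) := by rw [this]
  refine ⟨(LinearMap.snd ℝ E F) ∘ₗ W.subtype ∘ₗ σ ∘ₗ π, ?_⟩
  rintro x ⟨p, hp, rfl⟩
  have hu : p.1 - p₀.1 ∈ D := by
    refine ⟨⟨p - p₀, ?_⟩, rfl⟩
    simpa [hW] using AffineSubspace.vsub_mem_direction hp hp₀
  have hπu : π (p.1 - p₀.1) = ⟨p.1 - p₀.1, hu⟩ :=
    Submodule.linearProjOfIsCompl_apply_left hC ⟨p.1 - p₀.1, hu⟩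
  set w : W := σ (π (p.1 - p₀.1)) with hw
  have hw1 : (w : E × F).1 = p.1 - p₀.1 := by
    have h1 := hσ' ⟨p.1 - p₀.1, hu⟩
    rw [hw, hπu]
    exact h1
  have hmem : (w : E × F) +ᵥ p₀ ∈ M' := AffineSubspace.vadd_mem_of_mem_direction w.2 hp₀
  have heq : (w : E × F) +ᵥ p₀ = (p.1, p₀.2 + ((LinearMap.snd ℝ E F) ∘ₗ W.subtype ∘ₗ σ ∘ₗ π) (p.1 - p₀.1)) := by
    have h2 : ((LinearMap.snd ℝ E F) ∘ₗ W.subtype ∘ₗ σ ∘ₗ π) (p.1 - p₀.1) = (w : E × F).2 := rfl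
    rw [h2]
    have hv : (w : E × F) +ᵥ p₀ = (w : E × F) + p₀ := rfl
    rw [hv]
    ext
    · show (w : E × F).1 + p₀.1 = p.1
      rw [hw1]; abel
    · show (w : E × F).2 + p₀.2 = p₀.2 + (w : E × F).2
      abel
  rwa [heq] at hmem

lemma lin_coeff_zero (b c : ℝ) (h : ∀ t : ℝ, 0 ≤ b * t + c) : b = 0 := by
  by_contra hb
  have := h (-(c + 1) / b)
  rw [mul_div_assoc'] at this
  rw [mul_comm, mul_div_assoc, div_self hb, mul_one] at this
  linarith

lemma quad_coeff_nonneg (a b c : ℝ) (h : ∀ t : ℝ, 0 ≤ a * t ^ 2 + b * t + c) : 0 ≤ a := by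
  by_contra ha
  push_neg at ha
  set t : ℝ := (1 + |b| + |c|) / (-a) + 1 with ht
  have hden : (0:ℝ) < -a := by linarith
  have ht1 : 1 ≤ t := by
    have h0 : 0 ≤ (1 + |b| + |c|) / (-a) := by positivity
    rw [ht]
    linarith
  have ht2 : -a * t ≥ 1 + |b| + |c| := by
    rw [ht, mul_add, mul_one]
    have : -a * ((1 + |b| + |c|) / (-a)) = 1 + |b| + |c| := by
      rw [mul_comm, div_mul_cancel₀]
      linarith
    nlinarith [abs_nonneg b, abs_nonneg c]
  have hb := le_abs_self b
  have hb' := neg_abs_le b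
  have hc := le_abs_self c
  have := h t
  nlinarith [abs_nonneg b, abs_nonneg c]

/-- If `M ⊆ ℝⁿ × ℝᵐ` is an affine subspace and `g` is a nonnegative partial quadratic
function on `ℝᵐ`, then `x ↦ inf { g y : (x,y) ∈ M }` is a nonnegative partial quadratic
function on `ℝⁿ`. -/
theorem isNPQF_constrained_inf {n m : ℕ}
    (M : AffineSubspace ℝ ((Fin n → ℝ) × (Fin m → ℝ)))
    (g : (Fin m → ℝ) → ℝ≥0∞) (hg : IsNPQF g) :
    IsNPQF (fun x : Fin n → ℝ =>
      sInf {t : ℝ≥0∞ | ∃ y : Fin m → ℝ, (x, y) ∈ M ∧ t = g y}) := by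
  classical
  obtain ⟨N, Q₀, b₀, c₀, hQsym, hq0, hgeq, hgtop⟩ := hg
  set B : (Fin m → ℝ) →ₗ[ℝ] (Fin m → ℝ) →ₗ[ℝ] ℝ := Matrix.toLinearMap₂' ℝ Q₀ with hBdef
  have hBapp : ∀ y z, B y z = y ⬝ᵥ Q₀ *ᵥ z := fun y z => Matrix.toLinearMap₂'_apply' Q₀ y z
  have hBsym : ∀ y z, B y z = B z y := by
    intro y z
    rw [hBapp, hBapp, Matrix.dotProduct_mulVec, ← Matrix.vecMul_transpose, hQsym.eq,
      dotProduct_comm]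
  set bl : (Fin m → ℝ) →ₗ[ℝ] ℝ :=
    { toFun := fun y => b₀ ⬝ᵥ y
      map_add' := fun y z => dotProduct_add b₀ y z
      map_smul' := fun r y => by simp [dotProduct_smul] } with hbl
  set q : (Fin m → ℝ) → ℝ := fun y => B y y + bl y + c₀ with hq
  have hqdef : ∀ y, q y = y ⬝ᵥ Q₀ *ᵥ y + b₀ ⬝ᵥ y + c₀ := by
    intro y; rw [hq]; simp only [hBapp]; rfl
  set M' : AffineSubspace ℝ ((Fin n → ℝ) × (Fin m → ℝ)) :=
    M ⊓ N.comap (AffineMap.snd (k := ℝ) (P1 := Fin n → ℝ) (P2 := Fin m → ℝ)) with hM'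
  have hM'mem : ∀ p : (Fin n → ℝ) × (Fin m → ℝ), p ∈ M' ↔ p ∈ M ∧ p.2 ∈ N := by
    intro p
    rw [hM', AffineSubspace.mem_inf_iff, AffineSubspace.mem_comap]
    rfl
  by_cases hne : ∃ p, p ∈ M'
  case neg =>
    have hfx : ∀ x : Fin n → ℝ, sInf {t : ℝ≥0∞ | ∃ y, (x, y) ∈ M ∧ t = g y} = ⊤ := by
      intro x
      rw [sInf_eq_top]
      rintro t ⟨y, hyM, rfl⟩
      by_cases hyN : y ∈ N
      · exact absurd ⟨(x, y), (hM'mem (x, y)).2 ⟨hyM, hyN⟩⟩ hne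
      · exact hgtop y hyN
    refine ⟨⊥, 0, 0, 0, ?_, ?_, ?_, ?_⟩
    · simp [Matrix.IsSymm]
    · intro x hx; exact absurd hx (AffineSubspace.notMem_bot ℝ _ x)
    · intro x hx; exact absurd hx (AffineSubspace.notMem_bot ℝ _ x)
    · intro x _; exact hfx x
  case pos =>
    obtain ⟨p₀, hp₀⟩ := hne
    -- affine selection for the projection
    obtain ⟨Λ₁, hsel⟩ := sel M' p₀ hp₀
    set P : AffineSubspace ℝ (Fin n → ℝ) :=
      M'.map (AffineMap.fst (k := ℝ) (P1 := Fin n → ℝ) (P2 := Fin m → ℝ)) with hP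
    have hPmem : ∀ x : Fin n → ℝ, x ∈ P ↔ ∃ p ∈ M', p.1 = x := by
      intro x
      rw [hP, AffineSubspace.mem_map]
      rfl
    set Y : (Fin n → ℝ) → (Fin m → ℝ) := fun x => p₀.2 + Λ₁ (x - p₀.1) with hY
    have hYmem : ∀ x ∈ P, (x, Y x) ∈ M' := by
      intro x hx
      exact hsel x ((hPmem x).1 hx)
    set V : Submodule ℝ (Fin m → ℝ) :=
      (M'.direction).comap (LinearMap.inr ℝ (Fin n → ℝ) (Fin m → ℝ)) with hV
    have hVmem : ∀ v : Fin m → ℝ, v ∈ V ↔ ((0 : Fin n → ℝ), v) ∈ M'.direction := by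
      intro v
      rw [hV, Submodule.mem_comap]
      rfl
    -- vertical moves stay in M'
    have hvert : ∀ x ∈ P, ∀ v ∈ V, (x, Y x + v) ∈ M' := by
      intro x hx v hv
      have h1 : ((0 : Fin n → ℝ), v) +ᵥ (x, Y x) ∈ M' :=
        AffineSubspace.vadd_mem_of_mem_direction ((hVmem v).1 hv) (hYmem x hx)
      have h2 : ((0 : Fin n → ℝ), v) +ᵥ (x, Y x) = (x, Y x + v) := by
        ext <;> simp [Prod.ext_iff] <;> abel
      rwa [h2] at h1
    have hsnd : ∀ p ∈ M', p.2 ∈ N := fun p hp => ((hM'mem p).1 hp).2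
    -- expansion lemma
    have hexp : ∀ (u w : Fin m → ℝ) (t : ℝ),
        q (u + t • w) = q u + (2 * B u w + bl w) * t + B w w * t ^ 2 := by
      intro u w t
      rw [hq]
      simp only [map_add, _root_.map_smul, LinearMap.add_apply, LinearMap.smul_apply, smul_eq_mul]
      rw [hBsym w u]
      ring
    -- nonnegativity of q on vertical slices
    have hqnn : ∀ x ∈ P, ∀ v ∈ V, 0 ≤ q (Y x + v) := by
      intro x hx v hv
      rw [hqdef]
      exact hq0 _ (hsnd _ (hvert x hx v hv))
    -- B is PSD on V
    have hpsd : ∀ w ∈ V, 0 ≤ B w w := by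
      intro w hw
      apply quad_coeff_nonneg (B w w) (2 * B (Y p₀.1) w + bl w) (q (Y p₀.1))
      intro t
      have hp₀P : p₀.1 ∈ P := (hPmem p₀.1).2 ⟨p₀, hp₀, rfl⟩
      have := hqnn p₀.1 hp₀P (t • w) (Submodule.smul_mem V t hw)
      rw [hexp] at this
      linarith [this]
    -- core construction
    obtain ⟨S, hSV, hS⟩ := core B hBsym V
    set lx : (Fin n → ℝ) → Module.Dual ℝ (Fin m → ℝ) :=
      fun x => (2 : ℝ) • (B (Y x)) + bl with hlx
    have hlxapp : ∀ x k, lx x k = 2 * B (Y x) k + bl k := by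
      intro x k
      rw [hlx]
      simp [smul_eq_mul]
    -- radical condition
    have hrad : ∀ x ∈ P, ∀ k ∈ V, (∀ w ∈ V, B k w = 0) → lx x k = 0 := by
      intro x hx k hk hkrad
      rw [hlxapp]
      apply lin_coeff_zero (2 * B (Y x) k + bl k) (q (Y x))
      intro t
      have := hqnn x hx (t • k) (Submodule.smul_mem V t hk)
      rw [hexp] at this
      have hBkk : B k k = 0 := hkrad k hk
      rw [hBkk] at this
      linarith [this]
    -- the optimal point
    have hmin : ∀ x ∈ P, ∀ k ∈ V, q (Y x + S (lx x)) ≤ q (Y x + k) := by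
      intro x hx k hk
      have hw' : k - S (lx x) ∈ V := Submodule.sub_mem V hk (hSV (lx x))
      have hkey : q (Y x + S (lx x) + (1 : ℝ) • (k - S (lx x))) =
          q (Y x + S (lx x)) + (2 * B (Y x + S (lx x)) (k - S (lx x)) + bl (k - S (lx x))) * 1
            + B (k - S (lx x)) (k - S (lx x)) * 1 ^ 2 := hexp _ _ 1
      have hlin : 2 * B (Y x + S (lx x)) (k - S (lx x)) + bl (k - S (lx x)) = 0 := by
        have h0 := hS (lx x) (hrad x hx) (k - S (lx x)) hw'
        have h1 : lx x (k - S (lx x)) = 2 * B (Y x) (k - S (lx x)) + bl (k - S (lx x)) :=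
          hlxapp x _
        simp only [map_add, LinearMap.add_apply] at h0 h1 ⊢
        linarith [h0, h1]
      have heq2 : Y x + S (lx x) + (1 : ℝ) • (k - S (lx x)) = Y x + k := by
        rw [one_smul]; abel
      rw [heq2, hlin] at hkey
      have := hpsd (k - S (lx x)) hw'
      rw [hkey]
      linarith
    -- affine form of the optimal point
    set Λ : (Fin n → ℝ) →ₗ[ℝ] (Fin m → ℝ) := Λ₁ + (2 : ℝ) • (S ∘ₗ B ∘ₗ Λ₁) with hΛ
    set a : Fin m → ℝ :=
      p₀.2 - Λ₁ p₀.1 + S (bl + (2 : ℝ) • B p₀.2 - (2 : ℝ) • B (Λ₁ p₀.1)) with ha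
    have hT : ∀ x, Y x + S (lx x) = Λ x + a := by
      intro x
      simp only [hlx, hY, hΛ, ha, map_add, map_sub, _root_.map_smul, LinearMap.add_apply,
        LinearMap.smul_apply, LinearMap.comp_apply, LinearMap.sub_apply, smul_sub, smul_add]
      abel
    set m' : (Fin n → ℝ) → ℝ := fun x => q (Λ x + a) with hm'
    -- quadratic data on ℝ^n
    set B' : (Fin n → ℝ) →ₗ[ℝ] (Fin n → ℝ) →ₗ[ℝ] ℝ := B.compl₁₂ Λ Λ with hB'
    have hB'app : ∀ x y, B' x y = B (Λ x) (Λ y) := fun x y => rfl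
    set l' : (Fin n → ℝ) →ₗ[ℝ] ℝ := ((B a) ∘ₗ Λ) + ((B.flip a) ∘ₗ Λ) + (bl ∘ₗ Λ) with hl'
    have hl'app : ∀ x, l' x = B a (Λ x) + B (Λ x) a + bl (Λ x) := by
      intro x
      rw [hl']
      simp [LinearMap.flip_apply]
    set c' : ℝ := B a a + bl a + c₀ with hc'
    have hmq : ∀ x, m' x = B' x x + l' x + c' := by
      intro x
      rw [hm', hq, hB'app, hl'app, hc']
      simp only [map_add, LinearMap.add_apply]
      rw [hBsym a (Λ x)]
      ring
    set Qmat : Matrix (Fin n) (Fin n) ℝ := LinearMap.toMatrix₂' ℝ B' with hQmat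
    have hQmatapp : ∀ x y : Fin n → ℝ, x ⬝ᵥ Qmat *ᵥ y = B' x y := by
      intro x y
      rw [← Matrix.toLinearMap₂'_apply' Qmat x y, hQmat]
      rw [show Matrix.toLinearMap₂' ℝ ((LinearMap.toMatrix₂' ℝ) B') = B' from
        (LinearMap.toMatrix₂' ℝ).symm_apply_apply B']
    have hQmatsym : Qmat.IsSymm := by
      apply Matrix.IsSymm.ext
      intro i j
      rw [hQmat]
      rw [LinearMap.toMatrix₂'_apply, LinearMap.toMatrix₂'_apply, hB'app, hB'app, hBsym]
    set bvec : Fin n → ℝ := fun i => l' (fun j => if i = j then 1 else 0) with hbvec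
    have hbvecapp : ∀ x : Fin n → ℝ, bvec ⬝ᵥ x = l' x := by
      intro x
      rw [LinearMap.pi_apply_eq_sum_univ l' x]
      rw [dotProduct]
      apply Finset.sum_congr rfl
      intro i _
      rw [hbvec, smul_eq_mul, mul_comm]
    have hquadval : ∀ x : Fin n → ℝ, x ⬝ᵥ Qmat *ᵥ x + bvec ⬝ᵥ x + c' = m' x := by
      intro x
      rw [hQmatapp, hbvecapp, hmq]
    -- the optimal point is feasible
    have hTfeas : ∀ x ∈ P, (x, Λ x + a) ∈ M' := by
      intro x hx
      rw [← hT x]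
      exact hvert x hx (S (lx x)) (hSV (lx x))
    -- assemble
    refine ⟨P, Qmat, bvec, c', hQmatsym, ?_, ?_, ?_⟩
    · intro x hx
      rw [hquadval]
      simp only [hm']
      rw [hqdef]
      exact hq0 _ (hsnd _ (hTfeas x hx))
    · intro x hx
      rw [hquadval]
      apply le_antisymm
      · apply sInf_le
        refine ⟨Λ x + a, ((hM'mem _).1 (hTfeas x hx)).1, ?_⟩
        rw [hgeq _ (hsnd _ (hTfeas x hx)), ← hqdef]
      · apply le_sInf
        rintro t ⟨y, hyM, rfl⟩
        by_cases hyN : y ∈ N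
        · have hyM' : (x, y) ∈ M' := (hM'mem (x, y)).2 ⟨hyM, hyN⟩
          have hk : y - Y x ∈ V := by
            rw [hVmem]
            have := AffineSubspace.vsub_mem_direction hyM' (hYmem x hx)
            have heq3 : (x, y) -ᵥ (x, Y x) = ((0 : Fin n → ℝ), y - Y x) := by
              ext <;> simp <;> abel
            rwa [heq3] at this
          have hle := hmin x hx (y - Y x) hk
          rw [show Y x + (y - Y x) = y by abel] at hle
          rw [hgeq y hyN, ← hqdef]
          simp only [hm']
          exact ENNReal.ofReal_le_ofReal (by rw [← hT x]; exact hle)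
        · rw [hgtop y hyN]
          exact le_top
    · intro x hx
      rw [sInf_eq_top]
      rintro t ⟨y, hyM, rfl⟩
      by_cases hyN : y ∈ N
      · exact absurd ((hPmem x).2 ⟨(x, y), (hM'mem (x, y)).2 ⟨hyM, hyN⟩, rfl⟩) hx
      · exact hgtop y hyN
end

section
/- If F : ℝ^m × ℝ^n → [0,∞] and G : ℝ^n × ℝ^p → [0,∞] are nonnegative partial quadratic functions (on ℝ^{m+n} and ℝ^{n+p} respectively), then their relational composite (F;G)(x,z) = inf { F(x,y) + G(y,z) : y ∈ ℝ^n } (infimum in [0,∞]) is a nonnegative partial quadratic function on ℝ^{m+p}. -/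
open Matrix
open scoped ENNReal

/-!
Sums and affine pullbacks of partial quadratic functions are partial quadratic, and `F;G` is the
infimum over `y` of such a sum, so everything reduces to minimising a partial quadratic `f(x, y)`
over `y`. The fibre of its domain `M` over `x` is `s x + L` for a fixed subspace `L` and an
affine section `s`, and on it `f(x, s x + l) = f(x, s x) + Q l + φₓ l` with `φₓ` affine in `x`.
Since this is bounded below, `Q` is positive semidefinite on `L` and `φₓ` vanishes on the radical
of its polar form `B`, hence `φₓ = B u` for some `u`; then `l = -u` is a minimiser. Choosing `u`
through a fixed linear right inverse of `B` makes the minimiser affine in `x`, so the minimum is a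
quadratic function composed with an affine map.
-/

open Module QuadraticMap

theorem LinearMap.exists_rightInvOn_range {K V V' : Type*} [DivisionRing K]
    [AddCommGroup V] [Module K V] [AddCommGroup V'] [Module K V'] (f : V →ₗ[K] V') :
    ∃ g : V' →ₗ[K] V, Set.RightInvOn g f (LinearMap.range f) := by
  obtain ⟨g₀, hg₀⟩ := f.rangeRestrict.exists_rightInverse_of_surjective f.range_rangeRestrict
  obtain ⟨g, hg⟩ := LinearMap.exists_extend g₀
  refine ⟨g, fun y hy => ?_⟩
  have hgy : g y = g₀ ⟨y, hy⟩ := congr($hg ⟨y, hy⟩)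
  rw [hgy]
  exact congr(Subtype.val ($hg₀ ⟨y, hy⟩))

namespace AffineSubspace

variable {K V W : Type*} [Field K] [AddCommGroup V] [Module K V] [AddCommGroup W] [Module K W]

theorem exists_affineMap_prodMk_mem (M : AffineSubspace K (V × W)) :
    ∃ s : V →ᵃ[K] W, ∀ x y, (x, y) ∈ M → (x, s x) ∈ M := by
  rcases (M : Set (V × W)).eq_empty_or_nonempty with hM | ⟨p, hp⟩
  · exact ⟨0, fun x y h => (Set.eq_empty_iff_forall_notMem.1 hM _ h).elim⟩
  obtain ⟨g, hg⟩ := (LinearMap.fst K V W ∘ₗ M.direction.subtype).exists_rightInvOn_range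
  set T := LinearMap.snd K V W ∘ₗ M.direction.subtype ∘ₗ g
  refine ⟨T.toAffineMap + AffineMap.const K V (p.2 - T p.1), fun x y hxy => ?_⟩
  have hd : (x, y) - p ∈ M.direction := M.vsub_mem_direction hxy hp
  have hfst : (g (x - p.1) : V × W).1 = x - p.1 := hg ⟨⟨_, hd⟩, rfl⟩
  convert M.vadd_mem_of_mem_direction (g (x - p.1)).2 hp using 1
  ext
  · change x = (g (x - p.1) : V × W).1 + p.1
    rw [hfst]
    abel
  · change T x + (p.2 - T p.1) = T (x - p.1) + p.2
    rw [map_sub]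
    abel

theorem prodMk_mem_iff_sub_mem {M : AffineSubspace K (V × W)} {x : V} {y₀ : W}
    (h : (x, y₀) ∈ M) (y : W) :
    (x, y) ∈ M ↔ y - y₀ ∈ M.direction.comap (LinearMap.inr K V W) := by
  rw [← M.vsub_right_mem_direction_iff_mem h, Submodule.mem_comap]
  simp

end AffineSubspace

theorem nonneg_and_eq_zero_of_forall_le_quadratic {𝕜 : Type*} [Field 𝕜] [LinearOrder 𝕜]
    [IsStrictOrderedRing 𝕜] {a b C : 𝕜} (h : ∀ t : 𝕜, C ≤ a * (t * t) + b * t) :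
    0 ≤ a ∧ (a = 0 → b = 0) := by
  have hdisc : discrim a b (-C) ≤ 0 := discrim_le_zero fun t => by linarith [h t]
  have h0 := h 0
  have h1 := h 1
  have h2 := h (-1)
  simp only [discrim] at hdisc
  constructor
  · by_contra! ha
    nlinarith [mul_pos (neg_pos.2 ha) (show 0 < -C by linarith)]
  · rintro rfl
    nlinarith [sq_nonneg b]

namespace QuadraticMap

variable {𝕜 E : Type*} [Field 𝕜] [LinearOrder 𝕜] [IsStrictOrderedRing 𝕜]
  [AddCommGroup E] [Module 𝕜 E]

theorem nonneg_and_eq_zero_of_bddBelow {Q : QuadraticForm 𝕜 E} {φ : Dual 𝕜 E}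
    (h : BddBelow (Set.range fun x => Q x + φ x)) (x : E) :
    0 ≤ Q x ∧ (Q x = 0 → φ x = 0) := by
  obtain ⟨C, hC⟩ := h
  refine nonneg_and_eq_zero_of_forall_le_quadratic (C := C) fun t => ?_
  simpa [QuadraticMap.map_smul, mul_comm _ (Q x), mul_comm _ (φ x)] using hC ⟨t • x, rfl⟩

theorem exists_linearMap_isMinOn_univ [FiniteDimensional 𝕜 E] (Q : QuadraticForm 𝕜 E) :
    ∃ S : Dual 𝕜 E →ₗ[𝕜] E, ∀ φ : Dual 𝕜 E, BddBelow (Set.range fun x => Q x + φ x) →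
      IsMinOn (fun x => Q x + φ x) Set.univ (S φ) := by
  obtain ⟨G, hG⟩ := (polarBilin Q).exists_rightInvOn_range
  refine ⟨-G, fun φ hφ => isMinOn_univ_iff.2 fun x => ?_⟩
  have hsymm : (polarBilin Q).flip = polarBilin Q := LinearMap.ext₂ fun x y => polar_comm Q y x
  have hrange : φ ∈ LinearMap.range (polarBilin Q) := by
    rw [← hsymm, ← LinearMap.dualAnnihilator_ker_eq_range_flip, Submodule.mem_dualAnnihilator]
    intro k hk
    refine (nonneg_and_eq_zero_of_bddBelow hφ k).2 ?_
    have : polar Q k k = 0 := by simpa using congr($hk k)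
    simpa [polar_self] using this
  have hu : ∀ y, φ y = polar Q (G φ) y := fun y => by rw [← polarBilin_apply_apply, hG hrange]
  -- `Q x + polar Q u x = Q (x + u) - Q u` is least at `x = -u`.
  have hexp := QuadraticMap.map_add Q x (G φ)
  have hself : polar Q (G φ) (G φ) = 2 * Q (G φ) := by simp [polar_self, two_smul]; ring
  rw [polar_comm] at hexp
  rw [LinearMap.neg_apply, QuadraticMap.map_neg, map_neg, hu, hu, hself]
  linarith [(nonneg_and_eq_zero_of_bddBelow hφ (x + G φ)).1]

theorem exists_linearMap_isMinOn (Q : QuadraticForm 𝕜 E) (L : Submodule 𝕜 E)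
    [FiniteDimensional 𝕜 L] :
    ∃ S : Dual 𝕜 E →ₗ[𝕜] E, ∀ φ : Dual 𝕜 E, S φ ∈ L ∧
      (BddBelow ((fun x => Q x + φ x) '' L) → IsMinOn (fun x => Q x + φ x) L (S φ)) := by
  obtain ⟨S, hS⟩ := (Q.comp L.subtype).exists_linearMap_isMinOn_univ
  refine ⟨L.subtype ∘ₗ S ∘ₗ L.subtype.dualMap, fun φ => ⟨(S _).2, fun ⟨C, hC⟩ => ?_⟩⟩
  have hbdd : BddBelow (Set.range fun y : L => Q.comp L.subtype y + L.subtype.dualMap φ y) := by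
    refine ⟨C, ?_⟩
    rintro _ ⟨y, rfl⟩
    exact hC ⟨y, y.2, rfl⟩
  exact isMinOn_iff.2 fun x hx => isMinOn_univ_iff.1 (hS _ hbdd) ⟨x, hx⟩

end QuadraticMap

section Quadratic

variable {V W : Type*} [AddCommGroup V] [Module ℝ V] [AddCommGroup W] [Module ℝ W]

def IsQuadratic (q : V → ℝ) : Prop :=
  ∃ (Q : QuadraticForm ℝ V) (ℓ : Dual ℝ V) (c : ℝ), ∀ x, q x = Q x + ℓ x + c

theorem IsQuadratic.add {q r : V → ℝ} (hq : IsQuadratic q) (hr : IsQuadratic r) :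
    IsQuadratic fun x => q x + r x := by
  obtain ⟨Q, ℓ, c, hq⟩ := hq
  obtain ⟨Q', ℓ', c', hr⟩ := hr
  refine ⟨Q + Q', ℓ + ℓ', c + c', fun x => ?_⟩
  simp only [hq, hr, _root_.add_apply, LinearMap.add_apply]
  ring

theorem IsQuadratic.comp_affineMap {q : W → ℝ} (hq : IsQuadratic q) (φ : V →ᵃ[ℝ] W) :
    IsQuadratic (q ∘ φ) := by
  obtain ⟨Q, ℓ, c, hq⟩ := hq
  refine ⟨Q.comp φ.linear, ((polarBilin Q).flip (φ 0) + ℓ) ∘ₗ φ.linear,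
    Q (φ 0) + ℓ (φ 0) + c, fun x => ?_⟩
  have hφ : φ x = φ.linear x + φ 0 := by simpa using φ.map_vadd 0 x
  simp only [Function.comp_apply, hq, hφ, QuadraticMap.map_add Q, map_add, QuadraticMap.comp_apply,
    LinearMap.comp_apply, LinearMap.add_apply, LinearMap.flip_apply, polarBilin_apply_apply]
  ring

theorem isQuadratic_iff_matrix {ι : Type*} [Fintype ι] (q : (ι → ℝ) → ℝ) :
    IsQuadratic q ↔ ∃ (Q : Matrix ι ι ℝ) (b : ι → ℝ) (c : ℝ),
      Q.IsSymm ∧ ∀ x, q x = x ⬝ᵥ Q *ᵥ x + b ⬝ᵥ x + c := by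
  classical
  constructor
  · rintro ⟨Q, ℓ, c, hq⟩
    refine ⟨Q.toMatrix', (dotProductEquiv ℝ ι).symm ℓ, c, Q.isSymm_toMatrix', fun x => ?_⟩
    have hℓ := congr($((dotProductEquiv ℝ ι).apply_symm_apply ℓ) x)
    rw [hq, ← Matrix.toLinearMap₂'_apply', QuadraticForm.toMatrix']
    simp only [dotProductEquiv_apply_apply] at hℓ
    simp [associated_eq_self_apply, hℓ]
  · rintro ⟨Q, b, c, -, hq⟩
    refine ⟨Q.toQuadraticForm', dotProductEquiv ℝ ι b, c, fun x => ?_⟩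
    simp [hq, Matrix.toQuadraticForm', Matrix.toLinearMap₂'_apply']

theorem IsQuadratic.exists_affineMap_isMinOn_add [FiniteDimensional ℝ W] {q : V → ℝ}
    (hq : IsQuadratic q) (j : W →ₗ[ℝ] V) (L : Submodule ℝ W) :
    ∃ m : V →ᵃ[ℝ] W, ∀ v, m v ∈ L ∧
      (BddBelow ((fun l => q (v + j l)) '' L) → IsMinOn (fun l => q (v + j l)) L (m v)) := by
  obtain ⟨Q, ℓ, c, hq⟩ := hq
  obtain ⟨S, hS⟩ := (Q.comp j).exists_linearMap_isMinOn L
  set Φ : V →ₗ[ℝ] Dual ℝ W := (polarBilin Q).compl₂ j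
  refine ⟨S.toAffineMap.comp (Φ.toAffineMap + AffineMap.const ℝ V (ℓ ∘ₗ j)), fun v => ?_⟩
  have hexp : (fun l => q (v + j l)) = fun l => Q.comp j l + (Φ v + ℓ ∘ₗ j) l + q v := by
    ext l
    rw [hq, hq, QuadraticMap.map_add Q, ℓ.map_add]
    simp only [Φ, QuadraticMap.comp_apply, LinearMap.add_apply, LinearMap.compl₂_apply,
      polarBilin_apply_apply, LinearMap.comp_apply]
    ring
  obtain ⟨hmem, hmin⟩ := hS (Φ v + ℓ ∘ₗ j)
  refine ⟨hmem, fun ⟨C, hC⟩ => ?_⟩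
  rw [hexp]
  refine (hmin ⟨C - q v, ?_⟩).add isMinOn_const
  rintro _ ⟨l, hl, rfl⟩
  exact sub_le_iff_le_add.2 (hC ⟨l, hl, congr_fun hexp l⟩)

theorem IsQuadratic.exists_affineMap_isMinOn_fiber [FiniteDimensional ℝ W] {q : V × W → ℝ}
    (hq : IsQuadratic q) (M : AffineSubspace ℝ (V × W)) (hM : ∀ v ∈ M, 0 ≤ q v) :
    ∃ σ : V →ᵃ[ℝ] W, ∀ x y, (x, y) ∈ M →
      (x, σ x) ∈ M ∧ IsMinOn (fun y => q (x, y)) {y | (x, y) ∈ M} (σ x) := by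
  obtain ⟨s, hs⟩ := M.exists_affineMap_prodMk_mem
  obtain ⟨m, hm⟩ := hq.exists_affineMap_isMinOn_add (LinearMap.inr ℝ V W)
    (M.direction.comap (LinearMap.inr ℝ V W))
  refine ⟨s + m.comp ((AffineMap.id ℝ V).prod s), fun x y hxy => ?_⟩
  have hx : (x, s x) ∈ M := hs x y hxy
  have hfib : ∀ l, (x, s x) + LinearMap.inr ℝ V W l = (x, s x + l) := fun l => by simp
  obtain ⟨hmem, hmin⟩ := hm (x, s x)
  have hbdd : BddBelow ((fun l => q ((x, s x) + LinearMap.inr ℝ V W l)) ''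
      M.direction.comap (LinearMap.inr ℝ V W)) := by
    refine ⟨0, ?_⟩
    rintro _ ⟨l, hl, rfl⟩
    change 0 ≤ q ((x, s x) + LinearMap.inr ℝ V W l)
    rw [hfib]
    exact hM _ ((M.prodMk_mem_iff_sub_mem hx _).2 (by rwa [add_sub_cancel_left]))
  change (x, s x + m (x, s x)) ∈ M ∧ IsMinOn _ _ (s x + m (x, s x))
  refine ⟨(M.prodMk_mem_iff_sub_mem hx _).2 (by rwa [add_sub_cancel_left]),
    isMinOn_iff.2 fun y' hy' => ?_⟩
  have := isMinOn_iff.1 (hmin hbdd) _ ((M.prodMk_mem_iff_sub_mem hx y').1 hy')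
  rwa [hfib, hfib, add_sub_cancel] at this

end Quadratic

section PartialQuadratic

variable {V W : Type*} [AddCommGroup V] [Module ℝ V] [AddCommGroup W] [Module ℝ W]

def IsPartialQuadratic (f : V → ℝ≥0∞) : Prop :=
  ∃ (M : AffineSubspace ℝ V) (q : V → ℝ), IsQuadratic q ∧ (∀ x ∈ M, 0 ≤ q x) ∧
    (∀ x ∈ M, f x = ENNReal.ofReal (q x)) ∧ ∀ x ∉ M, f x = ⊤

theorem isNPQF_iff_isPartialQuadratic {ι : Type} [Fintype ι] (f : (ι → ℝ) → ℝ≥0∞) :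
    IsNPQF f ↔ IsPartialQuadratic f := by
  constructor
  · rintro ⟨M, Q, b, c, hQ, hnn, hval, htop⟩
    exact ⟨M, _, (isQuadratic_iff_matrix _).2 ⟨Q, b, c, hQ, fun _ => rfl⟩, hnn, hval, htop⟩
  · rintro ⟨M, q, hq, hnn, hval, htop⟩
    obtain ⟨Q, b, c, hQ, hq⟩ := (isQuadratic_iff_matrix q).1 hq
    simp only [hq] at hnn hval
    exact ⟨M, Q, b, c, hQ, hnn, hval, htop⟩

theorem IsPartialQuadratic.add {f g : V → ℝ≥0∞} (hf : IsPartialQuadratic f)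
    (hg : IsPartialQuadratic g) : IsPartialQuadratic fun x => f x + g x := by
  obtain ⟨M, q, hq, hqnn, hfq, hftop⟩ := hf
  obtain ⟨N, r, hr, hrnn, hgr, hgtop⟩ := hg
  refine ⟨M ⊓ N, _, hq.add hr, fun x hx => add_nonneg (hqnn x hx.1) (hrnn x hx.2),
    fun x hx => ?_, fun x hx => ?_⟩
  · change f x + g x = _
    rw [hfq x hx.1, hgr x hx.2, ENNReal.ofReal_add (hqnn x hx.1) (hrnn x hx.2)]
  · by_cases hxM : x ∈ M
    · simp [hgtop x fun hxN => hx ⟨hxM, hxN⟩]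
    · simp [hftop x hxM]

theorem IsPartialQuadratic.comp_affineMap {f : W → ℝ≥0∞} (hf : IsPartialQuadratic f)
    (φ : V →ᵃ[ℝ] W) : IsPartialQuadratic (f ∘ φ) := by
  obtain ⟨M, q, hq, hnn, hval, htop⟩ := hf
  exact ⟨M.comap φ, q ∘ φ, hq.comp_affineMap φ, fun x hx => hnn _ hx, fun x hx => hval _ hx,
    fun x hx => htop _ hx⟩

theorem IsPartialQuadratic.iInf_snd [FiniteDimensional ℝ W] {f : V × W → ℝ≥0∞}
    (hf : IsPartialQuadratic f) : IsPartialQuadratic fun x => ⨅ y, f (x, y) := by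
  obtain ⟨M, q, hq, hnn, hval, htop⟩ := hf
  obtain ⟨σ, hσ⟩ := hq.exists_affineMap_isMinOn_fiber M hnn
  have hproj : ∀ x, x ∈ M.map (LinearMap.fst ℝ V W).toAffineMap ↔ ∃ y, (x, y) ∈ M := by
    simp [AffineSubspace.mem_map]
  refine ⟨M.map (LinearMap.fst ℝ V W).toAffineMap, _,
    hq.comp_affineMap ((AffineMap.id ℝ V).prod σ), fun x hx => ?_, fun x hx => ?_, fun x hx => ?_⟩
  · obtain ⟨y, hy⟩ := (hproj x).1 hx
    exact hnn _ (hσ x y hy).1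
  · obtain ⟨y, hy⟩ := (hproj x).1 hx
    obtain ⟨hσmem, hσmin⟩ := hσ x y hy
    refine le_antisymm (iInf_le_of_le (σ x) (hval _ hσmem).le) (le_iInf fun y' => ?_)
    by_cases hy' : (x, y') ∈ M
    · rw [hval _ hy']
      exact ENNReal.ofReal_le_ofReal (isMinOn_iff.1 hσmin y' hy')
    · simp [htop _ hy']
  · exact iInf_eq_top.2 fun y => htop _ fun hy => hx ((hproj x).2 ⟨y, hy⟩)

end PartialQuadratic

/-- If `F : ℝᵐ × ℝⁿ → [0,∞]` and `G : ℝⁿ × ℝᵖ → [0,∞]` are nonnegative partial quadratic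
functions (under the identification of `ℝᵐ × ℝⁿ` with `ℝ^{m+n}` via `Fin m ⊕ Fin n`),
then their relational composite `(F;G)(x,z) = inf_y (F(x,y) + G(y,z))` is a nonnegative
partial quadratic function on `ℝ^{m+p}`. -/
theorem isNPQF_comp {m n p : ℕ}
    (F : (Fin m → ℝ) → (Fin n → ℝ) → ℝ≥0∞) (G : (Fin n → ℝ) → (Fin p → ℝ) → ℝ≥0∞)
    (hF : IsNPQF (fun v : Fin m ⊕ Fin n → ℝ => F (v ∘ Sum.inl) (v ∘ Sum.inr)))
    (hG : IsNPQF (fun v : Fin n ⊕ Fin p → ℝ => G (v ∘ Sum.inl) (v ∘ Sum.inr))) :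
    IsNPQF (fun v : Fin m ⊕ Fin p → ℝ =>
      ⨅ y : Fin n → ℝ, F (v ∘ Sum.inl) y + G y (v ∘ Sum.inr)) := by
  rw [isNPQF_iff_isPartialQuadratic] at hF hG ⊢
  let toLeft : (Fin m ⊕ Fin p → ℝ) × (Fin n → ℝ) →ₗ[ℝ] (Fin m ⊕ Fin n → ℝ) :=
    (LinearEquiv.sumArrowLequivProdArrow _ _ ℝ ℝ).symm.toLinearMap ∘ₗ
      (LinearMap.funLeft ℝ ℝ Sum.inl).prodMap LinearMap.id
  let toRight : (Fin m ⊕ Fin p → ℝ) × (Fin n → ℝ) →ₗ[ℝ] (Fin n ⊕ Fin p → ℝ) :=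
    (LinearEquiv.sumArrowLequivProdArrow _ _ ℝ ℝ).symm.toLinearMap ∘ₗ
      (LinearMap.snd ℝ _ _).prod (LinearMap.funLeft ℝ ℝ Sum.inr ∘ₗ LinearMap.fst ℝ _ _)
  exact ((hF.comp_affineMap toLeft.toAffineMap).add
    (hG.comp_affineMap toRight.toAffineMap)).iInf_snd
end

section
/- Let A ∈ ℝ^{n×m} and let Ω ∈ ℝ^{n×n} be any generalized inverse of A·Aᵀ (i.e. (A·Aᵀ)·Ω·(A·Aᵀ) = A·Aᵀ). Then for every y ∈ ℝ^n: inf { (1/2)‖x‖² : x ∈ ℝ^m, A·x = y } (infimum in [0,∞], inf ∅ = +∞) equals (1/2)⟨y, Ω·y⟩ if y lies in the column space of A, and equals +∞ otherwise. In particular, the value ⟨y, Ω·y⟩ for y in the column space of A does not depend on the choice of generalized inverse Ω. -/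
open Matrix
open scoped ENNReal

/-- Let `Ω` be any generalized inverse of `A·Aᵀ`. Then for every `y`,
`inf { ½‖x‖² : A x = y }` equals `½⟨y, Ω y⟩` when `y` is in the column space of `A`,
and `+∞` otherwise. -/
theorem half_norm_sq_inf_eq_generalized_inverse {n m : ℕ}
    (A : Matrix (Fin n) (Fin m) ℝ) (Ω : Matrix (Fin n) (Fin n) ℝ)
    (hΩ : A * Aᵀ * Ω * (A * Aᵀ) = A * Aᵀ) :
    ∀ y : Fin n → ℝ,
      (y ∈ Set.range A.mulVec →
        sInf {t : ℝ≥0∞ | ∃ x : Fin m → ℝ, A.mulVec x = y ∧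
            t = ENNReal.ofReal (2⁻¹ * ∑ i, x i ^ 2)} =
          ENNReal.ofReal (2⁻¹ * (y ⬝ᵥ Ω.mulVec y))) ∧
      (y ∉ Set.range A.mulVec →
        sInf {t : ℝ≥0∞ | ∃ x : Fin m → ℝ, A.mulVec x = y ∧
            t = ENNReal.ofReal (2⁻¹ * ∑ i, x i ^ 2)} = ⊤) := by
  have hΩ' : A * (Aᵀ * (Ω * (A * Aᵀ))) = A * Aᵀ := by
    simpa only [Matrix.mul_assoc] using hΩ
  have hΩT' : A * (Aᵀ * (Ωᵀ * (A * Aᵀ))) = A * Aᵀ := by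
    have h := congrArg Matrix.transpose hΩ
    simpa only [Matrix.transpose_mul, Matrix.transpose_transpose, Matrix.mul_assoc] using h
  have key : A * Aᵀ * Ω * A = A := by
    have hM : (A * Aᵀ * Ω * A - A) * (A * Aᵀ * Ω * A - A)ᵀ = 0 := by
      simp only [Matrix.transpose_sub, Matrix.transpose_mul, Matrix.transpose_transpose,
        Matrix.sub_mul, Matrix.mul_sub, Matrix.mul_assoc, hΩT', hΩ']
      abel
    have hz : A * Aᵀ * Ω * A - A = 0 := by
      apply Matrix.self_mul_conjTranspose_eq_zero.mp
      rw [Matrix.conjTranspose_eq_transpose_of_trivial]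
      exact hM
    exact sub_eq_zero.mp hz
  intro y
  constructor
  · rintro ⟨z, rfl⟩
    set x₀ : Fin m → ℝ := Aᵀ.mulVec (Ω.mulVec (A.mulVec z)) with hx₀def
    have hx₀ : A.mulVec x₀ = A.mulVec z := by
      rw [hx₀def, Matrix.mulVec_mulVec, Matrix.mulVec_mulVec, Matrix.mulVec_mulVec, key]
    have hdot : ∀ v : Fin m → ℝ, x₀ ⬝ᵥ v = Ω.mulVec (A.mulVec z) ⬝ᵥ A.mulVec v := by
      intro v
      rw [hx₀def, Matrix.mulVec_transpose, ← Matrix.dotProduct_mulVec]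
    have hval : ∑ i, x₀ i ^ 2 = A.mulVec z ⬝ᵥ Ω.mulVec (A.mulVec z) := by
      have h1 : ∑ i, x₀ i ^ 2 = x₀ ⬝ᵥ x₀ := by simp [dotProduct, sq]
      rw [h1, hdot x₀, hx₀, dotProduct_comm]
    have hbound : ∀ x : Fin m → ℝ, A.mulVec x = A.mulVec z →
        ∑ i, x₀ i ^ 2 ≤ ∑ i, x i ^ 2 := by
      intro x hx
      have hd : A.mulVec (x - x₀) = 0 := by
        rw [Matrix.mulVec_sub, hx, hx₀, sub_self]
      have hortho : x₀ ⬝ᵥ (x - x₀) = 0 := by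
        rw [hdot (x - x₀), hd, dotProduct_zero]
      have hexp : ∑ i, x i ^ 2 =
          ∑ i, x₀ i ^ 2 + (2 * (x₀ ⬝ᵥ (x - x₀)) + ∑ i, (x - x₀) i ^ 2) := by
        simp only [dotProduct, Pi.sub_apply, Finset.mul_sum]
        rw [← Finset.sum_add_distrib, ← Finset.sum_add_distrib]
        apply Finset.sum_congr rfl
        intro i _
        ring
      have hsq : (0:ℝ) ≤ ∑ i, (x - x₀) i ^ 2 :=
        Finset.sum_nonneg fun i _ => sq_nonneg _
      rw [hexp, hortho]
      linarith
    apply le_antisymm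
    · exact sInf_le ⟨x₀, hx₀, by rw [hval]⟩
    · apply le_sInf
      rintro t ⟨x, hx, rfl⟩
      apply ENNReal.ofReal_le_ofReal
      have h := hbound x hx
      rw [← hval]
      linarith
  · intro hy
    have hempty : {t : ℝ≥0∞ | ∃ x : Fin m → ℝ, A.mulVec x = y ∧
        t = ENNReal.ofReal (2⁻¹ * ∑ i, x i ^ 2)} = ∅ := by
      ext t
      simp only [Set.mem_setOf_eq, Set.mem_empty_iff_false, iff_false]
      rintro ⟨x, hx, -⟩
      exact hy ⟨x, hx⟩
    rw [hempty, sInf_empty]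
end

section
/- Let M ⊆ ℝ^n × ℝ^m be a nonempty affine subspace. Then there exist a vector subspace D ⊆ ℝ^m and an affine map g : ℝ^n → ℝ^m with g(x) ∈ D^⊥ for all x, such that for every x ∈ ℝ^n, the fiber M_x = { y ∈ ℝ^m : (x,y) ∈ M } satisfies: if M_x is nonempty then M_x = { g(x) + d : d ∈ D }. -/
open Matrix

/-! The nonempty fibers of `M` are cosets of `D = {d | (0, d) ∈ M.direction}`. Fix `(x₀, y₀) ∈ M`
and a linear map `h` whose graph over the first projection of `M.direction` lies in
`M.direction`; then `y₀ + h (x - x₀)` lies in every nonempty fiber `M_x` and is affine in `x`.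
Projecting it onto `Dᗮ` along `D` gives `g`. -/

section

variable {K E F : Type*} [Field K] [AddCommGroup E] [Module K E] [AddCommGroup F] [Module K F]

theorem Submodule.exists_linearMap_mk_fst_mem (W : Submodule K (E × F)) :
    ∃ h : E →ₗ[K] F, ∀ w ∈ W, (w.1, h w.1) ∈ W := by
  set f := LinearMap.fst K E F ∘ₗ W.subtype
  obtain ⟨σ, hσ⟩ := f.rangeRestrict.exists_rightInverse_of_surjective f.range_rangeRestrict
  obtain ⟨h, hh⟩ := (LinearMap.snd K E F ∘ₗ W.subtype ∘ₗ σ).exists_extend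
  refine ⟨h, fun w hw => ?_⟩
  set u : LinearMap.range f := f.rangeRestrict ⟨w, hw⟩
  have hfst : ((σ u : W) : E × F).1 = w.1 := congrArg Subtype.val (LinearMap.congr_fun hσ u)
  have hsnd : h w.1 = ((σ u : W) : E × F).2 := LinearMap.congr_fun hh u
  rw [hsnd, ← hfst]
  exact (σ u).2

theorem Submodule.setOf_sub_mem_eq {D : Submodule K F} {w w' : F} (hw : w - w' ∈ D) :
    {y | y - w ∈ D} = {y | ∃ d ∈ D, y = w' + d} := by
  ext y
  refine ⟨fun hy => ⟨y - w', ?_, by abel⟩, ?_⟩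
  · simpa using D.add_mem hy hw
  · rintro ⟨d, hd, rfl⟩
    show w' + d - w ∈ D
    convert D.sub_mem hd hw using 1
    abel

namespace AffineSubspace

theorem mk_mem_iff_sub_mem_comap_inr (M : AffineSubspace K (E × F)) {x₀ x : E} {y₀ y₁ : F}
    (h₀ : (x₀, y₀) ∈ M) (h₁ : (x, y₁) ∈ M) {h : E →ₗ[K] F}
    (hh : ∀ w ∈ M.direction, (w.1, h w.1) ∈ M.direction) (y : F) :
    (x, y) ∈ M ↔ y - (y₀ + h (x - x₀)) ∈ M.direction.comap (LinearMap.inr K E F) := by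
  have hgraph : (x - x₀, h (x - x₀)) ∈ M.direction :=
    hh _ (M.vsub_mem_direction h₁ h₀)
  rw [← M.vsub_right_mem_direction_iff_mem h₀, ← M.direction.sub_mem_iff_left hgraph,
    Submodule.mem_comap]
  have hdiff : (x, y) -ᵥ (x₀, y₀) - (x - x₀, h (x - x₀)) =
      LinearMap.inr K E F (y - (y₀ + h (x - x₀))) := by
    ext <;> simp [sub_sub]
  rw [hdiff]

theorem exists_affineMap_setOf_mk_mem_eq (M : AffineSubspace K (E × F))
    (hM : (M : Set (E × F)).Nonempty) {C : Submodule K F}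
    (hC : IsCompl C (M.direction.comap (LinearMap.inr K E F))) :
    ∃ g : E →ᵃ[K] F, (∀ x, g x ∈ C) ∧ ∀ x, {y | (x, y) ∈ M}.Nonempty →
      {y | (x, y) ∈ M} = {y | ∃ d ∈ M.direction.comap (LinearMap.inr K E F), y = g x + d} := by
  obtain ⟨⟨x₀, y₀⟩, h₀⟩ := hM
  obtain ⟨h, hh⟩ := M.direction.exists_linearMap_mk_fst_mem
  set P := C.projection _ hC
  set g := (P ∘ₗ h).toAffineMap + AffineMap.const K E (P (y₀ - h x₀))
  have hg : ∀ x, g x = P (y₀ + h (x - x₀)) := fun x => by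
    simp only [g, AffineMap.coe_add, Pi.add_apply, LinearMap.coe_toAffineMap,
      AffineMap.const_apply, LinearMap.comp_apply, map_add, map_sub]
    abel
  refine ⟨g, fun x => hg x ▸ Submodule.projection_apply_mem hC _, fun x ⟨y₁, h₁⟩ => ?_⟩
  rw [hg, ← Submodule.setOf_sub_mem_eq (Submodule.sub_projection_mem hC _)]
  ext y
  exact M.mk_mem_iff_sub_mem_comap_inr h₀ h₁ hh y

end AffineSubspace

end

theorem Matrix.isCompl_orthogonal_dotProductBilin {ι R : Type*} [Fintype ι] [Field R]
    [LinearOrder R] [IsStrictOrderedRing R] (D : Submodule R (ι → R)) :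
    IsCompl (LinearMap.BilinForm.orthogonal (dotProductBilin R R) D) D := by
  refine IsCompl.symm <| (LinearMap.BilinForm.isCompl_orthogonal_iff_disjoint
    fun x y hxy => ?_).mpr ?_
  · simpa [dotProduct_comm] using hxy
  · refine Submodule.disjoint_def.mpr fun x hx hx' => ?_
    simpa using hx' x hx

/-- Let `M ⊆ ℝⁿ × ℝᵐ` be a nonempty affine subspace. Then there exist a vector subspace
`D ⊆ ℝᵐ` and an affine map `g x = B x + v` with values orthogonal to `D`, such that every
nonempty fiber `M_x = { y : (x,y) ∈ M }` equals `g x + D`. -/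
theorem affine_fibers_eq_affine_map_add_subspace {n m : ℕ}
    (M : AffineSubspace ℝ ((Fin n → ℝ) × (Fin m → ℝ)))
    (hM : (M : Set ((Fin n → ℝ) × (Fin m → ℝ))).Nonempty) :
    ∃ (D : Submodule ℝ (Fin m → ℝ)) (B : Matrix (Fin m) (Fin n) ℝ) (v : Fin m → ℝ),
      (∀ x : Fin n → ℝ, ∀ d ∈ D, (B.mulVec x + v) ⬝ᵥ d = 0) ∧
      ∀ x : Fin n → ℝ, {y : Fin m → ℝ | (x, y) ∈ M}.Nonempty →
        {y : Fin m → ℝ | (x, y) ∈ M} =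
          {y : Fin m → ℝ | ∃ d ∈ D, y = B.mulVec x + v + d} := by
  set D := M.direction.comap (LinearMap.inr ℝ _ _)
  obtain ⟨g, hgC, hfiber⟩ := M.exists_affineMap_setOf_mk_mem_eq hM
    (isCompl_orthogonal_dotProductBilin D)
  have hg : ∀ x, (LinearMap.toMatrix' g.linear).mulVec x + g 0 = g x := fun x => by
    rw [LinearMap.toMatrix'_mulVec]
    exact (congrFun g.decomp x).symm
  refine ⟨D, LinearMap.toMatrix' g.linear, g 0, fun x d hd => ?_, fun x hx => ?_⟩
  · rw [hg, dotProduct_comm]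
    exact hgC x d hd
  · simpa only [hg] using hfiber x hx
end

section
/- For i = 1, 2, let Dᵢ ⊆ ℝⁿ be a vector subspace, μᵢ ∈ Dᵢ^⊥, and Lᵢ ∈ ℝ^{n×n} with column space contained in Dᵢ^⊥. Define fᵢ : ℝⁿ → [0,∞] by fᵢ(x) = inf { (1/2)‖z‖² : z ∈ ℝⁿ, x − μᵢ − Lᵢ·z ∈ Dᵢ } (infimum in [0,∞], inf ∅ = +∞). If f₁(x) = f₂(x) for all x ∈ ℝⁿ, then D₁ = D₂, μ₁ = μ₂, and L₁·L₁ᵀ = L₂·L₂ᵀ. -/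
/-!
Because the columns of `L` are orthogonal to `D`, all feasible `z` at a point `x` have the same
image `L z`, so Cauchy–Schwarz bounds the weight at `x` below by `(y ⬝ᵥ L z)² / (2‖Lᵀ y‖²)`.
Hence the weight vanishes exactly on the affine subspace `μ + D`, which determines `D` and, as
`μ ⊥ D`, also `μ`; and its value at `μ + L Lᵀ y` pins down the quadratic form `y ↦ ‖Lᵀ y‖²`,
which determines `L Lᵀ` by polarization.
-/

open Matrix
open scoped ENNReal

section ExtendedGaussian

variable {ι κ : Type*} [Fintype κ]

noncomputable def extGaussianWeight (D : Submodule ℝ (ι → ℝ)) (μ : ι → ℝ)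
    (L : Matrix ι κ ℝ) (x : ι → ℝ) : ℝ≥0∞ :=
  sInf {t : ℝ≥0∞ | ∃ z : κ → ℝ, x - μ - L.mulVec z ∈ D ∧
    t = ENNReal.ofReal (2⁻¹ * ∑ i, z i ^ 2)}

variable {D : Submodule ℝ (ι → ℝ)} {μ x : ι → ℝ} {L : Matrix ι κ ℝ}

theorem extGaussianWeight_le {z : κ → ℝ} (hz : x - μ - L *ᵥ z ∈ D) :
    extGaussianWeight D μ L x ≤ ENNReal.ofReal (2⁻¹ * ∑ i, z i ^ 2) :=
  sInf_le ⟨z, hz, rfl⟩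

theorem extGaussianWeight_ne_top {z : κ → ℝ} (hz : x - μ - L *ᵥ z ∈ D) :
    extGaussianWeight D μ L x ≠ ⊤ :=
  ne_top_of_le_ne_top ENNReal.ofReal_ne_top (extGaussianWeight_le hz)

theorem exists_sub_mem_of_extGaussianWeight_ne_top (h : extGaussianWeight D μ L x ≠ ⊤) :
    ∃ z : κ → ℝ, x - μ - L *ᵥ z ∈ D := by
  obtain ⟨-, ⟨z, hz, -⟩, -⟩ := sInf_lt_iff.mp (lt_top_iff_ne_top.mpr h)
  exact ⟨z, hz⟩

theorem toReal_extGaussianWeight_le {z : κ → ℝ} (hz : x - μ - L *ᵥ z ∈ D) :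
    (extGaussianWeight D μ L x).toReal ≤ 2⁻¹ * ∑ i, z i ^ 2 :=
  ENNReal.toReal_le_of_le_ofReal (by positivity) (extGaussianWeight_le hz)

theorem le_toReal_extGaussianWeight {z₀ : κ → ℝ} (hz₀ : x - μ - L *ᵥ z₀ ∈ D) {c : ℝ}
    (hc : ∀ z : κ → ℝ, x - μ - L *ᵥ z ∈ D → c ≤ 2⁻¹ * ∑ i, z i ^ 2) :
    c ≤ (extGaussianWeight D μ L x).toReal := by
  refine (ENNReal.ofReal_le_iff_le_toReal (extGaussianWeight_ne_top hz₀)).mp (le_sInf ?_)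
  rintro _ ⟨z, hz, rfl⟩
  exact ENNReal.ofReal_le_ofReal (hc z hz)

variable [Fintype ι]

theorem eq_of_sub_mem_of_dotProduct_eq_zero {a b : ι → ℝ}
    (ha : ∀ d ∈ D, a ⬝ᵥ d = 0) (hb : ∀ d ∈ D, b ⬝ᵥ d = 0) (hab : a - b ∈ D) : a = b := by
  have : (a - b) ⬝ᵥ (a - b) = 0 := by rw [sub_dotProduct, ha _ hab, hb _ hab, sub_zero]
  exact sub_eq_zero.mp (dotProduct_self_eq_zero.mp this)

theorem mulVec_eq_of_sub_mem {L₁ L₂ : Matrix ι κ ℝ}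
    (hL₁ : ∀ z : κ → ℝ, ∀ d ∈ D, L₁ *ᵥ z ⬝ᵥ d = 0) (hL₂ : ∀ z : κ → ℝ, ∀ d ∈ D, L₂ *ᵥ z ⬝ᵥ d = 0)
    {z₁ z₂ : κ → ℝ} (h₁ : x - μ - L₁ *ᵥ z₁ ∈ D) (h₂ : x - μ - L₂ *ᵥ z₂ ∈ D) :
    L₁ *ᵥ z₁ = L₂ *ᵥ z₂ :=
  eq_of_sub_mem_of_dotProduct_eq_zero (hL₁ z₁) (hL₂ z₂) <| by
    simpa only [sub_sub_sub_cancel_left] using D.sub_mem h₂ h₁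

theorem sq_dotProduct_mulVec_le (hL : ∀ z : κ → ℝ, ∀ d ∈ D, L *ᵥ z ⬝ᵥ d = 0) {z₀ : κ → ℝ}
    (hz₀ : x - μ - L *ᵥ z₀ ∈ D) (y : ι → ℝ) :
    (y ⬝ᵥ L *ᵥ z₀) ^ 2 ≤ (∑ i, (y ᵥ* L) i ^ 2) * (2 * (extGaussianWeight D μ L x).toReal) := by
  have hcs : ∀ z, x - μ - L *ᵥ z ∈ D →
      (y ⬝ᵥ L *ᵥ z₀) ^ 2 ≤ (∑ i, (y ᵥ* L) i ^ 2) * ∑ i, z i ^ 2 := by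
    intro z hz
    rw [mulVec_eq_of_sub_mem hL hL hz₀ hz, dotProduct_mulVec]
    exact Finset.sum_mul_sq_le_sq_mul_sq _ _ _
  have hK₀ : 0 ≤ ∑ i, (y ᵥ* L) i ^ 2 := by positivity
  rcases hK₀.eq_or_lt with hK | hK
  · simpa only [← hK, zero_mul] using hcs z₀ hz₀
  · have hw : 2⁻¹ * ((y ⬝ᵥ L *ᵥ z₀) ^ 2 / ∑ i, (y ᵥ* L) i ^ 2) ≤
        (extGaussianWeight D μ L x).toReal := by
      refine le_toReal_extGaussianWeight hz₀ fun z hz => ?_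
      gcongr
      exact (div_le_iff₀' hK).mpr (hcs z hz)
    exact (div_le_iff₀' hK).mp (by linarith)

theorem extGaussianWeight_eq_zero_iff (hL : ∀ z : κ → ℝ, ∀ d ∈ D, L *ᵥ z ⬝ᵥ d = 0) :
    extGaussianWeight D μ L x = 0 ↔ x ∈ AffineSubspace.mk' μ D := by
  rw [AffineSubspace.mem_mk', vsub_eq_sub]
  refine ⟨fun h => ?_, fun hx => le_antisymm ?_ zero_le⟩
  · obtain ⟨z₀, hz₀⟩ := exists_sub_mem_of_extGaussianWeight_ne_top (h ▸ ENNReal.zero_ne_top)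
    have hq := sq_dotProduct_mulVec_le hL hz₀ (L *ᵥ z₀)
    rw [h, ENNReal.toReal_zero, mul_zero, mul_zero] at hq
    have : L *ᵥ z₀ = 0 := dotProduct_self_eq_zero.mp (pow_eq_zero_iff two_ne_zero |>.mp
      (le_antisymm hq (sq_nonneg _)))
    simpa [this] using hz₀
  · simpa using extGaussianWeight_le (L := L) (z := 0) (by simpa using hx)

/-- Test at `x = μ + L₂ L₂ᵀ y`, where `L₂ᵀ y` is feasible for `L₂`. -/
theorem sum_sq_vecMul_le_of_extGaussianWeight_le {L₁ L₂ : Matrix ι κ ℝ}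
    (hL₁ : ∀ z : κ → ℝ, ∀ d ∈ D, L₁ *ᵥ z ⬝ᵥ d = 0) (hL₂ : ∀ z : κ → ℝ, ∀ d ∈ D, L₂ *ᵥ z ⬝ᵥ d = 0)
    (hle : ∀ x, extGaussianWeight D μ L₁ x ≤ extGaussianWeight D μ L₂ x) (y : ι → ℝ) :
    ∑ i, (y ᵥ* L₂) i ^ 2 ≤ ∑ i, (y ᵥ* L₁) i ^ 2 := by
  set u := y ᵥ* L₂
  have hu : (μ + L₂ *ᵥ u) - μ - L₂ *ᵥ u ∈ D := by simp
  obtain ⟨z₀, hz₀⟩ := exists_sub_mem_of_extGaussianWeight_ne_top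
    (ne_top_of_le_ne_top (extGaussianWeight_ne_top hu) (hle _))
  have hs : y ⬝ᵥ L₁ *ᵥ z₀ = ∑ i, u i ^ 2 := by
    rw [mulVec_eq_of_sub_mem hL₁ hL₂ hz₀ hu, dotProduct_mulVec]
    simp only [u, dotProduct, sq]
  have hw : (extGaussianWeight D μ L₁ (μ + L₂ *ᵥ u)).toReal ≤ 2⁻¹ * ∑ i, u i ^ 2 :=
    (ENNReal.toReal_mono (extGaussianWeight_ne_top hu) (hle _)).trans
      (toReal_extGaussianWeight_le hu)
  have key := sq_dotProduct_mulVec_le hL₁ hz₀ y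
  rw [hs] at key
  have hs₀ : 0 ≤ ∑ i, u i ^ 2 := by positivity
  have ht₀ : 0 ≤ ∑ i, (y ᵥ* L₁) i ^ 2 := by positivity
  nlinarith

end ExtendedGaussian

theorem mul_transpose_eq_of_sum_sq_vecMul_eq {ι κ : Type*} [Fintype ι] [DecidableEq ι]
    [Fintype κ] {A B : Matrix ι κ ℝ} (h : ∀ y, ∑ k, (y ᵥ* A) k ^ 2 = ∑ k, (y ᵥ* B) k ^ 2) :
    A * Aᵀ = B * Bᵀ := by
  ext i j
  have hij := h (Pi.single i 1 + Pi.single j 1)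
  have hi := h (Pi.single i 1)
  have hj := h (Pi.single j 1)
  simp only [add_vecMul, single_one_vecMul, Pi.add_apply, add_sq, Finset.sum_add_distrib,
    row_apply] at hij hi hj
  simp only [mul_assoc, ← Finset.mul_sum] at hij
  simp only [mul_apply, transpose_apply]
  linarith

/-- Uniqueness of the normal-form parameters of an extended Gaussian: if the quadratic
weight functions `x ↦ inf { ½‖z‖² : x - μᵢ - Lᵢ z ∈ Dᵢ }` agree for `i = 1, 2`, where
`μᵢ ∈ Dᵢ^⊥` and the columns of `Lᵢ` lie in `Dᵢ^⊥`, then `D₁ = D₂`, `μ₁ = μ₂` and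
`L₁L₁ᵀ = L₂L₂ᵀ`. -/
theorem extended_gaussian_nf_unique {n : ℕ}
    (D₁ D₂ : Submodule ℝ (Fin n → ℝ)) (μ₁ μ₂ : Fin n → ℝ)
    (L₁ L₂ : Matrix (Fin n) (Fin n) ℝ)
    (hμ₁ : ∀ d ∈ D₁, μ₁ ⬝ᵥ d = 0) (hμ₂ : ∀ d ∈ D₂, μ₂ ⬝ᵥ d = 0)
    (hL₁ : ∀ z : Fin n → ℝ, ∀ d ∈ D₁, L₁.mulVec z ⬝ᵥ d = 0)
    (hL₂ : ∀ z : Fin n → ℝ, ∀ d ∈ D₂, L₂.mulVec z ⬝ᵥ d = 0)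
    (hf : ∀ x : Fin n → ℝ,
      sInf {t : ℝ≥0∞ | ∃ z : Fin n → ℝ, x - μ₁ - L₁.mulVec z ∈ D₁ ∧
          t = ENNReal.ofReal (2⁻¹ * ∑ i, z i ^ 2)} =
        sInf {t : ℝ≥0∞ | ∃ z : Fin n → ℝ, x - μ₂ - L₂.mulVec z ∈ D₂ ∧
          t = ENNReal.ofReal (2⁻¹ * ∑ i, z i ^ 2)}) :
    D₁ = D₂ ∧ μ₁ = μ₂ ∧ L₁ * L₁ᵀ = L₂ * L₂ᵀ := by
  have hw : ∀ x, extGaussianWeight D₁ μ₁ L₁ x = extGaussianWeight D₂ μ₂ L₂ x := hf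
  have hA : AffineSubspace.mk' μ₁ D₁ = AffineSubspace.mk' μ₂ D₂ := by
    ext x
    rw [← extGaussianWeight_eq_zero_iff hL₁, ← extGaussianWeight_eq_zero_iff hL₂, hw]
  obtain rfl : D₁ = D₂ := by
    simpa only [AffineSubspace.direction_mk'] using congrArg AffineSubspace.direction hA
  obtain rfl : μ₁ = μ₂ := eq_of_sub_mem_of_dotProduct_eq_zero hμ₁ hμ₂ <|
    AffineSubspace.mem_mk'.mp (hA ▸ AffineSubspace.self_mem_mk' μ₁ D₁)
  refine ⟨rfl, rfl, mul_transpose_eq_of_sum_sq_vecMul_eq fun y => le_antisymm ?_ ?_⟩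
  · exact sum_sq_vecMul_le_of_extGaussianWeight_le hL₂ hL₁ (fun x => (hw x).ge) y
  · exact sum_sq_vecMul_le_of_extGaussianWeight_le hL₁ hL₂ (fun x => (hw x).le) y
end

section
/- For i = 1, 2, let Aᵢ ∈ ℝ^{n×m}, μᵢ ∈ ℝⁿ, and Lᵢ ∈ ℝ^{n×n}. Define Fᵢ : ℝ^m × ℝⁿ → [0,∞] by Fᵢ(x,y) = inf { (1/2)‖z‖² : z ∈ ℝⁿ, y = Aᵢ·x + μᵢ + Lᵢ·z } (infimum in [0,∞], inf ∅ = +∞). If F₁(x,y) = F₂(x,y) for all x ∈ ℝ^m and y ∈ ℝⁿ, then A₁ = A₂, μ₁ = μ₂, and L₁·L₁ᵀ = L₂·L₂ᵀ. -/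
/-!
Write `F(x, y) = q_L(y - A x - μ)`, where `q_L(r) = inf {½‖z‖² : L z = r}`. Taking `y = A₁ x + μ₁`
gives `q_{L₂}(A₁ x + μ₁ - A₂ x - μ₂) = 0`, and `q_L(r) = 0` forces `r = 0`; hence the affine parts
agree. For the covariances, the Fenchel–Young inequality `⟪v, L z⟫ ≤ ½‖Lᵀv‖² + ½‖z‖²` gives
`⟪v, r⟫ - ½‖Lᵀv‖² ≤ q_L(r)`; at `r = L₁L₁ᵀv` this yields `‖L₁ᵀv‖² ≤ ‖L₂ᵀv‖²` whenever
`q_{L₂} ≤ q_{L₁}`, i.e. `L₁L₁ᵀ ≤ L₂L₂ᵀ` in the Loewner order, and antisymmetry concludes.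
-/

open Matrix
open scoped ENNReal

section NoiseCost

variable {ι ν : Type*} [Fintype ν]

/-- The cost `q_L(r)` of the header; it is `sInf ∅ = ⊤` when `r` is not in the range of `L`. -/
noncomputable def noiseCost (L : Matrix ι ν ℝ) (r : ι → ℝ) : ℝ≥0∞ :=
  sInf {t | ∃ z, L *ᵥ z = r ∧ t = ENNReal.ofReal (2⁻¹ * (z ⬝ᵥ z))}

theorem sInf_affine_noise_eq_noiseCost {κ : Type*} [Fintype κ] (A : Matrix ι κ ℝ)
    (μ : ι → ℝ) (L : Matrix ι ν ℝ) (x : κ → ℝ) (y : ι → ℝ) :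
    sInf {t : ℝ≥0∞ | ∃ z : ν → ℝ, y = A *ᵥ x + μ + L *ᵥ z ∧
        t = ENNReal.ofReal (2⁻¹ * ∑ i, z i ^ 2)} = noiseCost L (y - (A *ᵥ x + μ)) := by
  simp only [noiseCost, eq_sub_iff_add_eq', eq_comm (a := y), dotProduct, sq]

theorem noiseCost_mulVec_le (L : Matrix ι ν ℝ) (w : ν → ℝ) :
    noiseCost L (L *ᵥ w) ≤ ENNReal.ofReal (2⁻¹ * (w ⬝ᵥ w)) :=
  sInf_le ⟨w, rfl, rfl⟩

@[simp]
theorem noiseCost_zero (L : Matrix ι ν ℝ) : noiseCost L 0 = 0 :=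
  nonpos_iff_eq_zero.1 <| by simpa using noiseCost_mulVec_le L 0

theorem dotProduct_self_nonneg {α R : Type*} [Fintype α] [Ring R] [LinearOrder R]
    [IsStrictOrderedRing R] (u : α → R) : 0 ≤ u ⬝ᵥ u :=
  Finset.sum_nonneg fun i _ => mul_self_nonneg (u i)

variable [Fintype ι]

theorem ofReal_le_noiseCost (L : Matrix ι ν ℝ) (v r : ι → ℝ) :
    ENNReal.ofReal (v ⬝ᵥ r - 2⁻¹ * (Lᵀ *ᵥ v ⬝ᵥ Lᵀ *ᵥ v)) ≤ noiseCost L r := by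
  refine le_sInf ?_
  rintro _ ⟨z, rfl, rfl⟩
  refine ENNReal.ofReal_le_ofReal ?_
  have := dotProduct_self_nonneg (Lᵀ *ᵥ v - z)
  rw [dotProduct_mulVec, ← mulVec_transpose]
  simp only [sub_dotProduct, dotProduct_sub, dotProduct_comm z] at this
  linarith

theorem eq_zero_of_noiseCost_eq_zero {L : Matrix ι ν ℝ} {r : ι → ℝ} (h : noiseCost L r = 0) :
    r = 0 := by
  set c := Lᵀ *ᵥ r ⬝ᵥ Lᵀ *ᵥ r
  have hc : 0 ≤ c := dotProduct_self_nonneg _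
  have hquad : ∀ t : ℝ, t * (r ⬝ᵥ r) ≤ 2⁻¹ * t ^ 2 * c := fun t => by
    have := ofReal_le_noiseCost L (t • r) r
    rw [h, nonpos_iff_eq_zero, ENNReal.ofReal_eq_zero] at this
    simp only [mulVec_smul, smul_dotProduct, dotProduct_smul, smul_eq_mul] at this
    linarith
  rw [← dotProduct_self_eq_zero]
  -- the quadratic inequality evaluated near its minimiser `t = ‖r‖² / c`
  have := hquad ((r ⬝ᵥ r) / (c + 1))
  field_simp at this
  nlinarith [dotProduct_self_nonneg r]

theorem dotProduct_mul_transpose_mulVec (L : Matrix ι ν ℝ) (v : ι → ℝ) :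
    v ⬝ᵥ (L * Lᵀ) *ᵥ v = Lᵀ *ᵥ v ⬝ᵥ Lᵀ *ᵥ v := by
  rw [← mulVec_mulVec, dotProduct_mulVec, ← mulVec_transpose]

end NoiseCost

section Loewner

open scoped MatrixOrder

variable {ι ν₁ ν₂ : Type*} [Fintype ι] [Fintype ν₁] [Fintype ν₂]

theorem mul_transpose_le_of_noiseCost_le {L₁ : Matrix ι ν₁ ℝ} {L₂ : Matrix ι ν₂ ℝ}
    (h : ∀ r, noiseCost L₂ r ≤ noiseCost L₁ r) : L₁ * L₁ᵀ ≤ L₂ * L₂ᵀ := by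
  rw [Matrix.le_iff, posSemidef_iff_dotProduct_mulVec]
  refine ⟨.sub (by simpa using isHermitian_mul_conjTranspose_self L₂)
    (by simpa using isHermitian_mul_conjTranspose_self L₁), fun v => ?_⟩
  have hv := (ofReal_le_noiseCost L₂ v (L₁ *ᵥ (L₁ᵀ *ᵥ v))).trans
    ((h _).trans (noiseCost_mulVec_le L₁ _))
  rw [ENNReal.ofReal_le_ofReal_iff (by positivity [dotProduct_self_nonneg (L₁ᵀ *ᵥ v)]),
    ← dotProduct_mul_transpose_mulVec, ← dotProduct_mul_transpose_mulVec, mulVec_mulVec] at hv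
  simp only [star_trivial, sub_mulVec, dotProduct_sub]
  linarith

theorem mul_transpose_eq_of_noiseCost_eq {L₁ : Matrix ι ν₁ ℝ} {L₂ : Matrix ι ν₂ ℝ}
    (h : ∀ r, noiseCost L₁ r = noiseCost L₂ r) : L₁ * L₁ᵀ = L₂ * L₂ᵀ :=
  le_antisymm (mul_transpose_le_of_noiseCost_le fun r => (h r).ge)
    (mul_transpose_le_of_noiseCost_le fun r => (h r).le)

end Loewner

/-- A Gaussian map is determined by its quadratic relation: if the functions
`(x,y) ↦ inf { ½‖z‖² : y = Aᵢ x + μᵢ + Lᵢ z }` agree for `i = 1, 2`, then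
`A₁ = A₂`, `μ₁ = μ₂` and `L₁L₁ᵀ = L₂L₂ᵀ`. -/
theorem gaussian_map_determined_by_quadratic_relation {n m : ℕ}
    (A₁ A₂ : Matrix (Fin n) (Fin m) ℝ) (μ₁ μ₂ : Fin n → ℝ)
    (L₁ L₂ : Matrix (Fin n) (Fin n) ℝ)
    (hF : ∀ (x : Fin m → ℝ) (y : Fin n → ℝ),
      sInf {t : ℝ≥0∞ | ∃ z : Fin n → ℝ, y = A₁.mulVec x + μ₁ + L₁.mulVec z ∧
          t = ENNReal.ofReal (2⁻¹ * ∑ i, z i ^ 2)} =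
        sInf {t : ℝ≥0∞ | ∃ z : Fin n → ℝ, y = A₂.mulVec x + μ₂ + L₂.mulVec z ∧
          t = ENNReal.ofReal (2⁻¹ * ∑ i, z i ^ 2)}) :
    A₁ = A₂ ∧ μ₁ = μ₂ ∧ L₁ * L₁ᵀ = L₂ * L₂ᵀ := by
  simp only [sInf_affine_noise_eq_noiseCost] at hF
  have affine_eq : ∀ x, A₁ *ᵥ x + μ₁ = A₂ *ᵥ x + μ₂ := fun x => by
    have h := hF x (A₁ *ᵥ x + μ₁)
    rw [sub_self, noiseCost_zero] at h
    exact sub_eq_zero.1 (eq_zero_of_noiseCost_eq_zero h.symm)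
  have hμ : μ₁ = μ₂ := by simpa using affine_eq 0
  subst hμ
  have hA : A₁ = A₂ := ext_iff_mulVec.2 fun x => add_right_cancel (affine_eq x)
  subst hA
  refine ⟨rfl, rfl, mul_transpose_eq_of_noiseCost_eq fun r => ?_⟩
  simpa using hF 0 (r + μ₁)
end
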